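/- In the reduction from 3SAT, S is satisfiable if and only if there is a stable model M of P₂ compatible with the stable model {d,e} of P₁; consequently, since no stable model of P₁ ⊕ P₂ contains d or e, S is unsatisfiable iff SM(P₁ ⊕ P₂) = SM(P₁) ⋈ SM(P₂). -/

import Mathlib

/-- A normal rule `head ← pos, not neg`. -/
structure NRule where
  head : ℕ
  pos : Set ℕ
  neg : Set ℕ

def NRule.atoms (r : NRule) : Set ℕ := {r.head} ∪ r.pos ∪ r.neg

/-- A normal logic program module `⟨R, I, O, H⟩`. -/
structure NMod where
  R : Set NRule
  I : Set ℕ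
  O : Set ℕ
  H : Set ℕ

def NMod.hb (P : NMod) : Set ℕ := P.I ∪ P.O ∪ P.H

def NMod.vis (P : NMod) : Set ℕ := P.I ∪ P.O

/-- Well-formedness of a module: `I`, `O`, `H` pairwise disjoint, atoms of the
rules contained in `I ∪ O ∪ H`, and no rule head in `I`. -/
def NMod.wf (P : NMod) : Prop :=
  P.I ∩ P.O = ∅ ∧ P.I ∩ P.H = ∅ ∧ P.O ∩ P.H = ∅ ∧
  (∀ r ∈ P.R, r.atoms ⊆ P.hb) ∧ (∀ r ∈ P.R, r.head ∉ P.I)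

/-- Edge of the positive dependency graph: `a` depends directly on `b`. -/
def ndepEdge (R : Set NRule) (b a : ℕ) : Prop := ∃ r ∈ R, r.head = a ∧ b ∈ r.pos

def ndep (R : Set NRule) : ℕ → ℕ → Prop := Relation.ReflTransGen (ndepEdge R)

/-- The composition `P₁ ⊕ P₂` (also used as underlying operation of the join `⊔`). -/
def NMod.comp (P₁ P₂ : NMod) : NMod :=
  ⟨P₁.R ∪ P₂.R, (P₁.I \ P₂.O) ∪ (P₂.I \ P₁.O), P₁.O ∪ P₂.O, P₁.H ∪ P₂.H⟩

/-- `P₁ ⊕ P₂` is defined: disjoint outputs and mutually respected hidden atoms. -/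
def compDefined (P₁ P₂ : NMod) : Prop :=
  P₁.O ∩ P₂.O = ∅ ∧ P₁.H ∩ P₂.hb = ∅ ∧ P₂.H ∩ P₁.hb = ∅

/-- Mutual dependence: some SCC of the positive dependency graph of `R₁ ∪ R₂`
contains output atoms of both modules. -/
def mutuallyDep (P₁ P₂ : NMod) : Prop :=
  ∃ a ∈ P₁.O, ∃ b ∈ P₂.O,
    ndep (P₁.R ∪ P₂.R) a b ∧ ndep (P₁.R ∪ P₂.R) b a

/-- The join `P₁ ⊔ P₂` is defined. -/
def joinDefined (P₁ P₂ : NMod) : Prop := compDefined P₁ P₂ ∧ ¬ mutuallyDep P₁ P₂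

/-- Least model of a positive program (a set of pairs `(head, positive body)`). -/
def lm (Q : Set (ℕ × Set ℕ)) : Set ℕ := ⋂₀ {X | ∀ p ∈ Q, p.2 ⊆ X → p.1 ∈ X}

/-- The input-aware reduct `R^{M,I}`. -/
def nreduct (R : Set NRule) (I M : Set ℕ) : Set (ℕ × Set ℕ) :=
  {p | ∃ r ∈ R, r.pos ∩ I ⊆ M ∧ r.neg ∩ M = ∅ ∧ p = (r.head, r.pos \ I)}

/-- Stable models of a module. -/
def NMod.SM (P : NMod) : Set (Set ℕ) :=
  {M | M ⊆ P.hb ∧ M \ P.I = lm (nreduct P.R P.I M)}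

/-- Compatibility of interpretations of two modules. -/
def compatible (P₁ P₂ : NMod) (M₁ M₂ : Set ℕ) : Prop :=
  M₁ ∩ P₂.vis = M₂ ∩ P₁.vis

/-- Natural join of two sets of interpretations. -/
def natJoin (P₁ P₂ : NMod) (A₁ A₂ : Set (Set ℕ)) : Set (Set ℕ) :=
  {M | ∃ M₁ ∈ A₁, ∃ M₂ ∈ A₂, compatible P₁ P₂ M₁ M₂ ∧ M = M₁ ∪ M₂}

/-- A three-literal clause: three literals, each an atom with a sign. -/
def Clause3 : Type := Fin 3 → ℕ × Bool

/-- Satisfiability of a set (list) of three-literal clauses. -/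
def satisfiable (S : List Clause3) : Prop :=
  ∃ v : ℕ → Bool, ∀ C ∈ S, ∃ j : Fin 3, v (C j).1 = (C j).2

/- Atom encoding: `d = 0`, `e = 1`, `cᵢ = 2i + 2`, variable `x` = `2x + 3`. -/
def varAtom (x : ℕ) : ℕ := 2 * x + 3
def cAtom (i : ℕ) : ℕ := 2 * i + 2

/-- The module `P₁ = ⟨{e ← d}, {d}, {e}, ∅⟩`. -/
def P1 : NMod := ⟨{⟨1, {0}, ∅⟩}, {0}, {1}, ∅⟩

/-- The rule `cᵢ ← fⱼ` for the `j`-th literal of clause `Cᵢ`. -/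
def litRule (i : ℕ) (l : ℕ × Bool) : NRule :=
  if l.2 then ⟨cAtom i, {varAtom l.1}, ∅⟩ else ⟨cAtom i, ∅, {varAtom l.1}⟩

/-- The variables occurring in `S`. -/
def varsOf (S : List Clause3) : Set ℕ :=
  {x | ∃ C ∈ S, ∃ j : Fin 3, (C j).1 = x}

/-- The module `P₂`: rules `cᵢ ← fⱼ` and `d ← e, c₁, …, cₙ`, with input
`Hb(S) ∪ {e}`, output `{d}` and hidden atoms `{c₁, …, cₙ}`. -/
def P2 (S : List Clause3) : NMod :=
  ⟨{r | ∃ i : Fin S.length, ∃ j : Fin 3, r = litRule i (S.get i j)} ∪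
     {⟨0, {1} ∪ {a | ∃ i : Fin S.length, a = cAtom i}, ∅⟩},
   (varAtom '' varsOf S) ∪ {1}, {0}, {a | ∃ i : Fin S.length, a = cAtom i}⟩

/-! In `P₁ ⊕ P₂` the atoms `d` and `e` are no longer inputs, and the rules `e ← d` and
`d ← e, c₁, …, cₙ` form a positive loop with no outside support, so no stable model of the
composition contains either of them; such a model is just a stable model of `P₂` with `e` false.
In `P₂`, whose inputs are `e` and the variable atoms, a stable model containing `d` and `e` exists
iff the chosen valuation makes every `cᵢ` derivable, i.e. satisfies every clause.
Since `SM(P₁) = {∅, {d, e}}`, the join consists of the stable models of `P₂` containing both or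
neither of `d`, `e`, so it equals `SM(P₁ ⊕ P₂)` exactly when no stable model of `P₂` contains
both, i.e. when `S` is unsatisfiable. -/

open Set

section LeastModel

variable {Q Q' : Set (ℕ × Set ℕ)}

lemma lm_subset_of_closed {X : Set ℕ} (h : ∀ p ∈ Q, p.2 ⊆ X → p.1 ∈ X) : lm Q ⊆ X :=
  sInter_subset_of_mem h

lemma head_mem_lm {p : ℕ × Set ℕ} (hp : p ∈ Q) (hb : p.2 ⊆ lm Q) : p.1 ∈ lm Q :=
  mem_sInter.mpr fun _ hX => hX p hp (hb.trans (lm_subset_of_closed hX))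

lemma lm_mono (h : Q ⊆ Q') : lm Q ⊆ lm Q' :=
  lm_subset_of_closed fun _ hp => head_mem_lm (h hp)

lemma lm_subset_heads : lm Q ⊆ Prod.fst '' Q :=
  lm_subset_of_closed fun _ hp _ => mem_image_of_mem _ hp

lemma lm_union_eq_left (h : ∀ p ∈ Q', ¬ p.2 ⊆ lm Q) : lm (Q ∪ Q') = lm Q :=
  (lm_subset_of_closed fun p hp hb => hp.elim (head_mem_lm · hb) (absurd hb <| h p ·)).antisymm
    (lm_mono subset_union_left)

lemma lm_empty : lm ∅ = ∅ :=
  subset_empty_iff.mp (lm_subset_heads.trans (image_empty _).subset)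

lemma lm_singleton_fact (a : ℕ) : lm {(a, ∅)} = {a} :=
  (lm_subset_heads.trans image_singleton.subset).antisymm
    (singleton_subset_iff.mpr (head_mem_lm rfl (empty_subset _)))

end LeastModel

lemma nreduct_union (R R' : Set NRule) (I M : Set ℕ) :
    nreduct (R ∪ R') I M = nreduct R I M ∪ nreduct R' I M := by
  ext p
  simp only [nreduct, mem_union, mem_ofPred_eq, or_and_right, exists_or]

lemma nreduct_singleton_of_disjoint {r : NRule} {I M : Set ℕ} (hpos : Disjoint r.pos I)
    (hneg : r.neg = ∅) : nreduct {r} I M = {(r.head, r.pos)} := by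
  ext p
  simp [nreduct, hpos.inter_eq, hpos.sdiff_eq_left, hneg]

@[simp] lemma varAtom_ne_zero (x : ℕ) : varAtom x ≠ 0 := by unfold varAtom; omega
@[simp] lemma varAtom_ne_one (x : ℕ) : varAtom x ≠ 1 := by unfold varAtom; omega
lemma cAtom_ne_zero (i : ℕ) : cAtom i ≠ 0 := by unfold cAtom; omega
lemma cAtom_ne_one (i : ℕ) : cAtom i ≠ 1 := by unfold cAtom; omega
@[simp] lemma varAtom_ne_cAtom (x i : ℕ) : varAtom x ≠ cAtom i := by unfold varAtom cAtom; omega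
@[simp] lemma varAtom_inj {x y : ℕ} : varAtom x = varAtom y ↔ x = y := by unfold varAtom; omega
lemma cAtom_inj {i j : ℕ} : cAtom i = cAtom j ↔ i = j := by unfold cAtom; omega

lemma nreduct_P1 (M : Set ℕ) : nreduct P1.R P1.I M = {p | 0 ∈ M ∧ p = (1, ∅)} := by
  ext p
  simp [nreduct, P1]

lemma P1_hb : P1.hb = {0, 1} := by
  ext a
  simp [NMod.hb, P1, or_comm]

lemma SM_P1 : P1.SM = {∅, {0, 1}} := by
  ext M
  simp only [NMod.SM, P1_hb, mem_ofPred_eq, nreduct_P1, mem_insert_iff, mem_singleton_iff]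
  constructor
  · rintro ⟨hsub, h⟩
    rcases subset_pair_iff_eq.mp hsub with rfl | rfl | rfl | rfl
    · simp
    · simp [P1, lm_singleton_fact] at h
    · simp [P1, lm_empty] at h
    · simp
  · rintro (rfl | rfl)
    · simp [lm_empty]
    · simp [P1, lm_singleton_fact]

section ClauseRules

open Classical in
noncomputable def valuationOf (M : Set ℕ) (x : ℕ) : Bool := decide (varAtom x ∈ M)

@[simp] lemma valuationOf_eq_true {M : Set ℕ} {x : ℕ} :
    valuationOf M x = true ↔ varAtom x ∈ M := by
  simp [valuationOf]

@[simp] lemma valuationOf_eq_false {M : Set ℕ} {x : ℕ} :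
    valuationOf M x = false ↔ varAtom x ∉ M := by
  simp [valuationOf]

def clauseRules (S : List Clause3) : Set NRule :=
  {r | ∃ i : Fin S.length, ∃ j : Fin 3, r = litRule i (S.get i j)}

def clauseReduct (S : List Clause3) (M : Set ℕ) : Set (ℕ × Set ℕ) :=
  {p | ∃ i : Fin S.length, ∃ j : Fin 3,
    valuationOf M (S.get i j).1 = (S.get i j).2 ∧ p = (cAtom i, ∅)}

lemma nreduct_litRule {I M : Set ℕ} (i : ℕ) (l : ℕ × Bool) (hl : varAtom l.1 ∈ I) :
    nreduct {litRule i l} I M = {p | valuationOf M l.1 = l.2 ∧ p = (cAtom i, ∅)} := by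
  obtain ⟨x, _ | _⟩ := l
  · ext p
    simp [nreduct, litRule]
  · have hdiff : {varAtom x} \ I = ∅ := sdiff_eq_empty.mpr (singleton_subset_iff.mpr hl)
    ext p
    simp [nreduct, litRule, hl, hdiff]

variable {S : List Clause3}

lemma varAtom_mem_of_mem_clause (i : Fin S.length) (j : Fin 3) :
    varAtom (S.get i j).1 ∈ varAtom '' varsOf S :=
  mem_image_of_mem _ ⟨S.get i, List.get_mem S i, j, rfl⟩

lemma nreduct_clauseRules {I M : Set ℕ} (hI : varAtom '' varsOf S ⊆ I) :
    nreduct (clauseRules S) I M = clauseReduct S M := by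
  ext p
  have hlit := fun (i : Fin S.length) j => Set.ext_iff.mp
    (nreduct_litRule (M := M) i (S.get i j) (hI (varAtom_mem_of_mem_clause i j))) p
  simp only [nreduct, mem_ofPred_eq, mem_singleton_iff, exists_eq_left] at hlit
  simp only [nreduct, clauseRules, clauseReduct, mem_ofPred_eq]
  constructor
  · rintro ⟨_, ⟨i, j, rfl⟩, hc⟩
    exact ⟨i, j, (hlit i j).mp hc⟩
  · rintro ⟨i, j, hc⟩
    exact ⟨_, ⟨i, j, rfl⟩, (hlit i j).mpr hc⟩

lemma clauseReduct_heads (M : Set ℕ) : Prod.fst '' clauseReduct S M ⊆ (P2 S).H := by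
  rintro _ ⟨_, ⟨i, j, -, rfl⟩, rfl⟩
  exact ⟨i, rfl⟩

lemma lm_clauseReduct_subset (M : Set ℕ) : lm (clauseReduct S M) ⊆ (P2 S).H :=
  lm_subset_heads.trans (clauseReduct_heads M)

end ClauseRules

section Reducts

variable {S : List Clause3}

lemma zero_notMem_P2_H : 0 ∉ (P2 S).H := fun ⟨i, h⟩ => cAtom_ne_zero i h.symm

lemma one_notMem_P2_H : 1 ∉ (P2 S).H := fun ⟨i, h⟩ => cAtom_ne_one i h.symm

lemma P2_I : (P2 S).I = varAtom '' varsOf S ∪ {1} := rfl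

lemma P2_R : (P2 S).R = clauseRules S ∪ {⟨0, {1} ∪ (P2 S).H, ∅⟩} := rfl

lemma nreduct_P2 (M : Set ℕ) :
    nreduct (P2 S).R (P2 S).I M = clauseReduct S M ∪ {p | 1 ∈ M ∧ p = (0, (P2 S).H)} := by
  have hinter : ({1} ∪ (P2 S).H) ∩ (P2 S).I = {1} := by
    ext a; simp [P2]; grind [cAtom, varAtom]
  have hdiff : ({1} ∪ (P2 S).H) \ (P2 S).I = (P2 S).H := by
    ext a; simp [P2]; grind [cAtom, varAtom]
  rw [P2_R, nreduct_union, nreduct_clauseRules (I := (P2 S).I) subset_union_left]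
  congr 1
  ext p
  simp only [nreduct, mem_ofPred_eq, mem_singleton_iff, exists_eq_left, hinter, hdiff,
    singleton_subset_iff, empty_inter, true_and]

lemma lm_nreduct_P2_of_one_mem {M : Set ℕ} (h1 : 1 ∈ M) :
    lm (nreduct (P2 S).R (P2 S).I M) = lm (clauseReduct S M ∪ {(0, (P2 S).H)}) := by
  simp [nreduct_P2, h1]

lemma P1_comp_P2_R : (P1.comp (P2 S)).R =
    {⟨1, {0}, ∅⟩} ∪ (clauseRules S ∪ {⟨0, {1} ∪ (P2 S).H, ∅⟩}) := rfl

lemma P1_comp_P2_I : (P1.comp (P2 S)).I = varAtom '' varsOf S := by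
  ext a
  simp [NMod.comp, P1, P2]

lemma P1_comp_P2_hb : (P1.comp (P2 S)).hb = (P2 S).hb := by
  ext a
  simp [NMod.hb, NMod.comp, P1, P2]

lemma nreduct_P1_comp_P2 (M : Set ℕ) :
    nreduct (P1.comp (P2 S)).R (P1.comp (P2 S)).I M =
      {(1, {0})} ∪ (clauseReduct S M ∪ {(0, {1} ∪ (P2 S).H)}) := by
  have hd : Disjoint ({0} : Set ℕ) (varAtom '' varsOf S) := by simp
  have he : Disjoint ({1} ∪ (P2 S).H) (varAtom '' varsOf S) := by simp [P2, disjoint_left]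
  rw [P1_comp_P2_R, P1_comp_P2_I, nreduct_union, nreduct_union, nreduct_clauseRules subset_rfl,
    nreduct_singleton_of_disjoint hd rfl, nreduct_singleton_of_disjoint he rfl]

lemma lm_nreduct_P1_comp_P2 (M : Set ℕ) :
    lm (nreduct (P1.comp (P2 S)).R (P1.comp (P2 S)).I M) = lm (clauseReduct S M) := by
  rw [nreduct_P1_comp_P2, union_left_comm]
  refine lm_union_eq_left ?_
  rintro p ((rfl | rfl) | rfl) hp
  · exact zero_notMem_P2_H (lm_clauseReduct_subset M (hp rfl))
  · exact one_notMem_P2_H (lm_clauseReduct_subset M (hp (Or.inl rfl)))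

end Reducts

section StableModels

variable {S : List Clause3}

lemma notMem_of_mem_SM_P1_comp_P2 {N : Set ℕ} (hN : N ∈ (P1.comp (P2 S)).SM) :
    0 ∉ N ∧ 1 ∉ N := by
  have hsub : N \ varAtom '' varsOf S ⊆ (P2 S).H := by
    rw [← P1_comp_P2_I, hN.2, lm_nreduct_P1_comp_P2]
    exact lm_clauseReduct_subset N
  exact ⟨fun h => zero_notMem_P2_H (hsub ⟨h, by simp⟩),
    fun h => one_notMem_P2_H (hsub ⟨h, by simp⟩)⟩

lemma mem_SM_P1_comp_P2_iff {N : Set ℕ} (h1 : 1 ∉ N) :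
    N ∈ (P1.comp (P2 S)).SM ↔ N ∈ (P2 S).SM := by
  have hdiff : N \ (P2 S).I = N \ (P1.comp (P2 S)).I := by
    rw [P1_comp_P2_I, P2_I, union_comm, ← sdiff_sdiff, sdiff_singleton_eq_self h1]
  simp only [NMod.SM, mem_ofPred_eq, P1_comp_P2_hb, lm_nreduct_P1_comp_P2, nreduct_P2, hdiff, h1,
    false_and, ofPred_false, union_empty]

lemma SM_P1_comp_P2 : (P1.comp (P2 S)).SM = {N ∈ (P2 S).SM | 0 ∉ N ∧ 1 ∉ N} := by
  ext N
  exact ⟨fun hN => ⟨(mem_SM_P1_comp_P2_iff (notMem_of_mem_SM_P1_comp_P2 hN).2).mp hN,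
      notMem_of_mem_SM_P1_comp_P2 hN⟩,
    fun hN => (mem_SM_P1_comp_P2_iff hN.2.2).mpr hN.1⟩

lemma satisfiable_of_mem_SM_P2 {M : Set ℕ} (hM : M ∈ (P2 S).SM) (h0 : 0 ∈ M) (h1 : 1 ∈ M) :
    satisfiable S := by
  refine ⟨valuationOf M, fun C hC => ?_⟩
  obtain ⟨i, rfl⟩ := List.mem_iff_get.mp hC
  by_contra! hfalse
  have hi : cAtom i ∉ lm (clauseReduct S M) := by
    rintro h
    obtain ⟨_, ⟨i', j, hj, rfl⟩, hi'⟩ := lm_subset_heads h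
    obtain rfl : i' = i := Fin.ext (cAtom_inj.mp hi')
    exact hfalse j hj
  have hlm : lm (clauseReduct S M ∪ {(0, (P2 S).H)}) = lm (clauseReduct S M) := by
    refine lm_union_eq_left ?_
    rintro _ rfl hsub
    exact hi (hsub ⟨i, rfl⟩)
  have h0' : 0 ∈ M \ (P2 S).I := ⟨h0, by simp [P2]⟩
  rw [hM.2, lm_nreduct_P2_of_one_mem h1, hlm] at h0'
  exact zero_notMem_P2_H (lm_clauseReduct_subset M h0')

def assignmentModel (S : List Clause3) (v : ℕ → Bool) : Set ℕ :=
  {0, 1} ∪ varAtom '' {x ∈ varsOf S | v x = true} ∪ (P2 S).H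

lemma valuationOf_assignmentModel {v : ℕ → Bool} {x : ℕ} (hx : x ∈ varsOf S) :
    valuationOf (assignmentModel S v) x = v x := by
  cases hv : v x <;> simp [assignmentModel, P2, hv, hx]

lemma assignmentModel_subset_hb (v : ℕ → Bool) : assignmentModel S v ⊆ (P2 S).hb := by
  intro a
  simp [assignmentModel, NMod.hb, P2]
  grind

lemma assignmentModel_diff_P2_I (v : ℕ → Bool) :
    assignmentModel S v \ (P2 S).I = insert 0 (P2 S).H := by
  ext a
  simp [assignmentModel, P2]
  grind [cAtom, varAtom]

lemma exists_SM_P2_of_satisfiable (hS : satisfiable S) :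
    ∃ M ∈ (P2 S).SM, 0 ∈ M ∧ 1 ∈ M := by
  obtain ⟨v, hv⟩ := hS
  set M := assignmentModel S v
  have hH : (P2 S).H ⊆ lm (clauseReduct S M ∪ {(0, (P2 S).H)}) := by
    rintro _ ⟨i, rfl⟩
    obtain ⟨j, hj⟩ := hv (S.get i) (List.get_mem S i)
    refine head_mem_lm (p := (cAtom i, ∅)) (Or.inl ⟨i, j, ?_, rfl⟩) (empty_subset _)
    rw [valuationOf_assignmentModel ⟨S.get i, List.get_mem S i, j, rfl⟩, hj]
  have hlm : lm (clauseReduct S M ∪ {(0, (P2 S).H)}) = insert 0 (P2 S).H := by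
    refine (lm_subset_heads.trans ?_).antisymm
      (insert_subset (head_mem_lm (p := (0, (P2 S).H)) (Or.inr rfl) hH) hH)
    rintro _ ⟨p, hp | rfl, rfl⟩
    · exact Or.inr (clauseReduct_heads M ⟨p, hp, rfl⟩)
    · exact Or.inl rfl
  have h1 : 1 ∈ M := by simp [M, assignmentModel]
  refine ⟨M, ⟨assignmentModel_subset_hb v, ?_⟩, by simp [M, assignmentModel], h1⟩
  rw [lm_nreduct_P2_of_one_mem h1, hlm, assignmentModel_diff_P2_I]

lemma satisfiable_iff_exists_SM_P2 : satisfiable S ↔ ∃ M ∈ (P2 S).SM, 0 ∈ M ∧ 1 ∈ M :=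
  ⟨exists_SM_P2_of_satisfiable, fun ⟨_, hM, h0, h1⟩ => satisfiable_of_mem_SM_P2 hM h0 h1⟩

lemma compatible_P1_P2_iff {M₁ M₂ : Set ℕ} (h : M₁ ⊆ {0, 1}) :
    compatible P1 (P2 S) M₁ M₂ ↔ M₁ = M₂ ∩ {0, 1} := by
  have hvis₁ : P1.vis = {0, 1} := by ext; simp [NMod.vis, P1, or_comm]
  have hvis₂ : M₁ ∩ (P2 S).vis = M₁ :=
    inter_eq_left.mpr (h.trans (by simp [NMod.vis, P2, insert_subset_iff]))
  rw [compatible, hvis₁, hvis₂]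

lemma natJoin_SM_P1_SM_P2 :
    natJoin P1 (P2 S) P1.SM (P2 S).SM = {N ∈ (P2 S).SM | (0 ∈ N ↔ 1 ∈ N)} := by
  have hP1 : ∀ N : Set ℕ, N ∩ {0, 1} ∈ P1.SM ↔ (0 ∈ N ↔ 1 ∈ N) := by
    intro N
    simp only [SM_P1, mem_insert_iff, mem_singleton_iff, inter_eq_right, insert_subset_iff,
      singleton_subset_iff, ← disjoint_iff_inter_eq_empty, disjoint_insert_right,
      disjoint_singleton_right]
    tauto
  ext N
  rw [mem_sep_iff, ← hP1]
  constructor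
  · rintro ⟨M₁, h₁, M₂, h₂, hc, rfl⟩
    rw [compatible_P1_P2_iff (P1_hb ▸ h₁.1)] at hc
    subst hc
    rw [union_eq_right.mpr inter_subset_left]
    exact ⟨h₂, h₁⟩
  · rintro ⟨hN, h⟩
    exact ⟨_, h, N, hN, (compatible_P1_P2_iff inter_subset_right).mpr rfl,
      (union_eq_right.mpr inter_subset_left).symm⟩

end StableModels

/-- correctness of the reduction: `S` is satisfiable iff some
stable model of `P₂` is compatible with the stable model `{d, e}` of `P₁`, and
`S` is unsatisfiable iff `SM(P₁ ⊕ P₂) = SM(P₁) ⋈ SM(P₂)`. -/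
theorem reduction_correct (S : List Clause3) :
    ({0, 1} : Set ℕ) ∈ P1.SM ∧
    (∀ N ∈ (P1.comp (P2 S)).SM, (0 : ℕ) ∉ N ∧ (1 : ℕ) ∉ N) ∧
    (satisfiable S ↔ ∃ M ∈ (P2 S).SM, compatible P1 (P2 S) {0, 1} M) ∧
    (¬ satisfiable S ↔
      (P1.comp (P2 S)).SM = natJoin P1 (P2 S) P1.SM (P2 S).SM) := by
  refine ⟨by simp [SM_P1], fun N hN => (SM_P1_comp_P2 ▸ hN).2, ?_, ?_⟩
  · rw [satisfiable_iff_exists_SM_P2]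
    refine exists_congr fun M => and_congr_right fun _ => ?_
    rw [compatible_P1_P2_iff subset_rfl, eq_comm, inter_eq_right, insert_subset_iff,
      singleton_subset_iff]
  · rw [satisfiable_iff_exists_SM_P2, SM_P1_comp_P2, natJoin_SM_P1_SM_P2, Set.ext_iff]
    simp only [mem_sep_iff, not_exists, not_and]
    grind
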